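/- (Theorem 3.8.) Let Z be a random vector in ℝ^d and Y an observation such that for almost every realization y of Y the posterior density p_{Z|Y}(·|y) is μ-strongly log-concave and satisfies (sup_z p_{Z|Y}(z|y))·(2π/μ)^{d/2} ≤ 1. Let D: ℝ^d → ℝ^{n_x} be L_D-Lipschitz, let X = D(Z), and assume the pushforward identity D_# p_{Z|Y}(·|y) = p_{X|Y}(·|y) for almost every y. Let Z_MAP = argmax_z p_{Z|Y}(z|Y) and X_MMSE = E[X|Y]. Then E‖D(Z_MAP) − X_MMSE‖ ≤ 2 L_D √(d/μ), and E‖X − D(Z_MAP)‖² ≤ D* + 4 L_D²·(d/μ), where D* = E‖X − X_MMSE‖². -/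

import Mathlib

/-!
At a maximiser `m` of a `μ`-strongly log-concave density `p`, strong convexity of `-log p` gives
`p z ≤ p m * exp (-(μ / 2) * ‖z - m‖ ^ 2)`. The peak condition `p m * (2π/μ)^(d/2) ≤ 1` says that
the right-hand side is at most the density of `𝒩(m, μ⁻¹ I)`, so the posterior second moment about
the MAP point is at most that of the Gaussian, `d / μ`. Jensen's inequality and the Lipschitz bound
on `D` then give `‖D m - E[X | Y]‖ ≤ L_D √(d/μ)`, and the bias–variance identity
`E‖X - a‖² = E‖X - E X‖² + ‖E X - a‖²` with `a = D m` turns this into the mean-square bound.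
Both estimates hold for almost every `y` and are integrated against the law of `Y`.
-/

open MeasureTheory Set Real ProbabilityTheory

/-- A probability density `p` on `ℝᵈ` is `μc`-strongly log-concave if `-log p` is twice
continuously differentiable and `μc`-strongly convex. -/
def StronglyLogConcave {d : ℕ} (μc : ℝ) (p : EuclideanSpace ℝ (Fin d) → ℝ) : Prop :=
  ContDiff ℝ 2 (fun x => -Real.log (p x)) ∧
    StrongConvexOn Set.univ μc (fun x => -Real.log (p x))

open Filter Topology

section Gaussian

variable {ι : Type*} [Fintype ι] {c : ℝ}

lemma integrable_sq_mul_exp_neg_mul_sq (hc : 0 < c) :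
    Integrable fun x : ℝ => x ^ 2 * exp (-c * x ^ 2) := by
  simpa [rpow_two] using integrable_rpow_mul_exp_neg_mul_sq hc (s := 2) (by norm_num)

lemma integral_sq_mul_exp_neg_mul_sq (hc : 0 < c) :
    ∫ x : ℝ, x ^ 2 * exp (-c * x ^ 2) = √(π / c) / (2 * c) := by
  set v : NNReal := (2 * c)⁻¹.toNNReal
  have hv : (v : ℝ) = (2 * c)⁻¹ := coe_toNNReal _ (by positivity)
  have hv0 : v ≠ 0 := by simp [v, hc]
  have hmoment : ∫ x, x ^ 2 ∂gaussianReal 0 v = (2 * c)⁻¹ := by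
    have := variance_eq_sub (memLp_id_gaussianReal' (μ := 0) (v := v) 2 (by simp))
    simpa [hv] using this.symm
  have hdensity (x : ℝ) : gaussianPDFReal 0 v x * x ^ 2 =
      (√(π / c))⁻¹ * (x ^ 2 * exp (-c * x ^ 2)) := by
    rw [gaussianPDFReal, hv, sub_zero, show 2 * π * (2 * c)⁻¹ = π / c by field_simp]
    field_simp
  simp only [integral_gaussianReal_eq_integral_smul hv0, smul_eq_mul, hdensity,
    integral_const_mul] at hmoment
  rw [inv_mul_eq_iff_eq_mul₀ (by positivity)] at hmoment
  rw [hmoment]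
  ring

lemma sum_sq_mul_exp_neg_mul_sum_sq [DecidableEq ι] (x : ι → ℝ) :
    (∑ i, x i ^ 2) * exp (-c * ∑ i, x i ^ 2) =
      ∑ i, ∏ j, (if j = i then x j ^ 2 else 1) * exp (-c * x j ^ 2) := by
  simp only [Finset.prod_mul_distrib, Finset.prod_ite_eq', Finset.mem_univ, if_true,
    ← Finset.sum_mul, ← exp_sum, Finset.mul_sum]

lemma integrable_prod_sq_mul_exp_neg_mul_sq [DecidableEq ι] (hc : 0 < c) (i : ι) :
    Integrable fun x : ι → ℝ => ∏ j, (if j = i then x j ^ 2 else 1) * exp (-c * x j ^ 2) := by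
  refine Integrable.fintype_prod
    (f := fun j t => (if j = i then t ^ 2 else 1) * exp (-c * t ^ 2)) fun j => ?_
  split_ifs
  · exact integrable_sq_mul_exp_neg_mul_sq hc
  · simpa using integrable_exp_neg_mul_sq hc

lemma integral_prod_sq_mul_exp_neg_mul_sq [DecidableEq ι] (hc : 0 < c) (i : ι) :
    ∫ x : ι → ℝ, ∏ j, (if j = i then x j ^ 2 else 1) * exp (-c * x j ^ 2) =
      (2 * c)⁻¹ * √(π / c) ^ Fintype.card ι := by
  have hfactor (j : ι) : ∫ t, (if j = i then t ^ 2 else 1) * exp (-c * t ^ 2) =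
      (if j = i then (2 * c)⁻¹ else 1) * √(π / c) := by
    split_ifs
    · rw [integral_sq_mul_exp_neg_mul_sq hc]
      ring
    · simpa using integral_gaussian c
  rw [integral_fintype_prod_volume_eq_prod
    (fun j t => (if j = i then t ^ 2 else 1) * exp (-c * t ^ 2))]
  simp only [hfactor, Finset.prod_mul_distrib, Finset.prod_ite_eq', Finset.mem_univ, if_true,
    Finset.prod_const, Finset.card_univ]

lemma integrable_sum_sq_mul_exp_neg_mul_sum_sq (hc : 0 < c) :
    Integrable fun x : ι → ℝ => (∑ i, x i ^ 2) * exp (-c * ∑ i, x i ^ 2) := by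
  classical
  simpa only [sum_sq_mul_exp_neg_mul_sum_sq] using
    integrable_finsetSum _ fun i _ => integrable_prod_sq_mul_exp_neg_mul_sq hc i

lemma integral_sum_sq_mul_exp_neg_mul_sum_sq (hc : 0 < c) :
    ∫ x : ι → ℝ, (∑ i, x i ^ 2) * exp (-c * ∑ i, x i ^ 2) =
      Fintype.card ι / (2 * c) * √(π / c) ^ Fintype.card ι := by
  classical
  simp only [sum_sq_mul_exp_neg_mul_sum_sq]
  rw [integral_finsetSum _ fun i _ => integrable_prod_sq_mul_exp_neg_mul_sq hc i]
  simp only [integral_prod_sq_mul_exp_neg_mul_sq hc, Finset.sum_const, Finset.card_univ,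
    nsmul_eq_mul]
  ring

lemma integrable_norm_sub_sq_mul_exp_neg_mul_norm_sub_sq (hc : 0 < c) (m : EuclideanSpace ℝ ι) :
    Integrable fun z : EuclideanSpace ℝ ι => ‖z - m‖ ^ 2 * exp (-c * ‖z - m‖ ^ 2) := by
  refine Integrable.comp_sub_right
    (f := fun z : EuclideanSpace ℝ ι => ‖z‖ ^ 2 * exp (-c * ‖z‖ ^ 2)) ?_ m
  simp only [EuclideanSpace.real_norm_sq_eq]
  exact (PiLp.volume_preserving_ofLp ι).integrable_comp_emb
    (MeasurableEquiv.toLp 2 (ι → ℝ)).symm.measurableEmbedding |>.2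
    (integrable_sum_sq_mul_exp_neg_mul_sum_sq hc)

lemma integral_norm_sub_sq_mul_exp_neg_mul_norm_sub_sq (hc : 0 < c) (m : EuclideanSpace ℝ ι) :
    ∫ z : EuclideanSpace ℝ ι, ‖z - m‖ ^ 2 * exp (-c * ‖z - m‖ ^ 2) =
      Fintype.card ι / (2 * c) * (π / c) ^ (Fintype.card ι / 2 : ℝ) := by
  rw [integral_sub_right_eq_self (fun z : EuclideanSpace ℝ ι => ‖z‖ ^ 2 * exp (-c * ‖z‖ ^ 2)) m]
  simp only [EuclideanSpace.real_norm_sq_eq]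
  rw [(PiLp.volume_preserving_ofLp ι).integral_comp
      (MeasurableEquiv.toLp 2 (ι → ℝ)).symm.measurableEmbedding
      (fun x : ι → ℝ => (∑ i, x i ^ 2) * exp (-c * ∑ i, x i ^ 2)),
    integral_sum_sq_mul_exp_neg_mul_sum_sq hc, sqrt_eq_rpow, ← rpow_natCast,
    ← rpow_mul (by positivity)]
  ring_nf

end Gaussian

lemma UniformConvexOn.add_le_of_isMinOn {E : Type*} [NormedAddCommGroup E] [NormedSpace ℝ E]
    {s : Set E} {φ : ℝ → ℝ} {f : E → ℝ} (hf : UniformConvexOn s φ f) {m z : E} (hm : m ∈ s)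
    (hz : z ∈ s) (hmin : IsMinOn f s m) : f m + φ ‖m - z‖ ≤ f z := by
  have hsegment : ∀ t ∈ Ioc (0 : ℝ) 1, f m + (1 - t) * φ ‖m - z‖ ≤ f z := by
    rintro t ⟨ht0, ht1⟩
    have hconv := hf.2 hm hz (sub_nonneg.2 ht1) ht0.le (sub_add_cancel 1 t)
    have hle : f m ≤ f ((1 - t) • m + t • z) :=
      hmin (hf.1 hm hz (sub_nonneg.2 ht1) ht0.le (sub_add_cancel 1 t))
    simp only [smul_eq_mul] at hconv
    nlinarith
  have hlim : Tendsto (fun t : ℝ => f m + (1 - t) * φ ‖m - z‖) (𝓝[>] 0)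
      (𝓝 (f m + φ ‖m - z‖)) := by
    refine tendsto_nhdsWithin_of_tendsto_nhds ?_
    convert (Continuous.tendsto (by fun_prop) 0 :
      Tendsto (fun t : ℝ => f m + (1 - t) * φ ‖m - z‖) _ _) using 2
    ring
  exact le_of_tendsto hlim (eventually_of_mem (Ioc_mem_nhdsGT one_pos) hsegment)

/-- `-log` sends the zeros of `p` to the junk value `0`, so a maximiser of `p` is only a local
minimiser of `-log p`: if `-log (p m) > 0`, continuity keeps these zeros away from `m`. -/
lemma isLocalMin_neg_log_of_forall_le {X : Type*} [TopologicalSpace X] {p : X → ℝ} {m : X}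
    (hp : ∀ z, 0 ≤ p z) (hcont : ContinuousAt (fun x => -log (p x)) m) (hm : ∀ z, p z ≤ p m) :
    IsLocalMin (fun x => -log (p x)) m := by
  have hpos (z : X) (hz : 0 < p z) : -log (p m) ≤ -log (p z) :=
    neg_le_neg (log_le_log hz (hm z))
  by_cases hlog : -log (p m) ≤ 0
  · refine Eventually.of_forall fun z => ?_
    rcases (hp z).eq_or_lt with h0 | h0
    · simpa [← h0] using hlog
    · exact hpos z h0
  · filter_upwards [hcont.eventually (lt_mem_nhds (not_le.1 hlog))] with z hz
    refine hpos z ((hp z).lt_of_ne fun h0 => ?_)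
    simp [← h0] at hz

lemma StronglyLogConcave.le_mul_exp_neg_mul_norm_sub_sq {d : ℕ} {μ : ℝ} (hμ : 0 ≤ μ)
    {p : EuclideanSpace ℝ (Fin d) → ℝ} (hlc : StronglyLogConcave μ p) (hp : ∀ z, 0 ≤ p z)
    {m : EuclideanSpace ℝ (Fin d)} (hm : ∀ z, p z ≤ p m) (z : EuclideanSpace ℝ (Fin d)) :
    p z ≤ p m * exp (-(μ / 2) * ‖z - m‖ ^ 2) := by
  obtain ⟨hsmooth, hconv⟩ := hlc
  have hmin : IsMinOn (fun x => -log (p x)) univ m := fun x _ =>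
    IsMinOn.of_isLocalMin_of_convex_univ
      (isLocalMin_neg_log_of_forall_le hp hsmooth.continuous.continuousAt hm)
      (hconv.convexOn fun r => by positivity) x
  have hgrowth := hconv.add_le_of_isMinOn (mem_univ m) (mem_univ z) hmin
  rcases (hp z).eq_or_lt with h0 | h0
  · rw [← h0]; exact mul_nonneg (hp m) (exp_pos _).le
  rw [norm_sub_rev] at hgrowth
  calc p z = exp (-(-log (p z))) := by rw [neg_neg, exp_log h0]
    _ ≤ exp (-(-log (p m)) + -(μ / 2) * ‖z - m‖ ^ 2) := by gcongr; linarith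
    _ = p m * exp (-(μ / 2) * ‖z - m‖ ^ 2) := by
        rw [exp_add, neg_neg, exp_log (h0.trans_le (hm z))]

lemma integrable_and_integral_le_of_lintegral_ofReal_le {α : Type*} [MeasurableSpace α]
    {μ : Measure α} {f : α → ℝ} (hf : AEStronglyMeasurable f μ) (hf0 : 0 ≤ᵐ[μ] f) {C : ℝ}
    (hC : 0 ≤ C) (h : ∫⁻ x, ENNReal.ofReal (f x) ∂μ ≤ ENNReal.ofReal C) :
    Integrable f μ ∧ ∫ x, f x ∂μ ≤ C := by
  refine ⟨⟨hf, (hasFiniteIntegral_iff_ofReal hf0).2 (h.trans_lt ENNReal.ofReal_lt_top)⟩, ?_⟩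
  rw [integral_eq_lintegral_of_nonneg_ae hf0 hf]
  exact ENNReal.toReal_le_of_le_ofReal hC h

lemma integral_norm_sub_sq_withDensity_le {ι : Type*} [Fintype ι] {p : EuclideanSpace ℝ ι → ℝ}
    {m : EuclideanSpace ℝ ι} {a c : ℝ} (hc : 0 < c) (ha : 0 ≤ a)
    (hp : ∀ z, p z ≤ a * exp (-c * ‖z - m‖ ^ 2)) :
    Integrable (fun z => ‖z - m‖ ^ 2) (volume.withDensity fun z => ENNReal.ofReal (p z)) ∧
      ∫ z, ‖z - m‖ ^ 2 ∂(volume.withDensity fun z => ENNReal.ofReal (p z)) ≤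
        a * (Fintype.card ι / (2 * c) * (π / c) ^ (Fintype.card ι / 2 : ℝ)) := by
  set q : EuclideanSpace ℝ ι → ℝ := fun z => a * exp (-c * ‖z - m‖ ^ 2)
  have hq : Continuous q := by fun_prop
  have hg : Continuous fun z : EuclideanSpace ℝ ι => ‖z - m‖ ^ 2 := by fun_prop
  refine integrable_and_integral_le_of_lintegral_ofReal_le hg.aestronglyMeasurable
    (.of_forall fun z => by positivity) (by positivity) ?_
  rw [← integral_norm_sub_sq_mul_exp_neg_mul_norm_sub_sq hc m, ← integral_const_mul]
  calc ∫⁻ z, ENNReal.ofReal (‖z - m‖ ^ 2) ∂(volume.withDensity fun z => ENNReal.ofReal (p z))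
      ≤ ∫⁻ z, ENNReal.ofReal (‖z - m‖ ^ 2) ∂(volume.withDensity fun z => ENNReal.ofReal (q z)) :=
        lintegral_mono' (withDensity_mono (.of_forall fun z => ENNReal.ofReal_le_ofReal (hp z)))
          le_rfl
    _ = ∫⁻ z, ENNReal.ofReal (a * (‖z - m‖ ^ 2 * exp (-c * ‖z - m‖ ^ 2))) := by
        rw [lintegral_withDensity_eq_lintegral_mul _ hq.measurable.ennreal_ofReal
          hg.measurable.ennreal_ofReal]
        congr 1 with z
        rw [Pi.mul_apply, ← ENNReal.ofReal_mul (by positivity)]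
        congr 1
        ring
    _ = ENNReal.ofReal (∫ z, a * (‖z - m‖ ^ 2 * exp (-c * ‖z - m‖ ^ 2))) :=
        (ofReal_integral_eq_lintegral_ofReal
          ((integrable_norm_sub_sq_mul_exp_neg_mul_norm_sub_sq hc m).const_mul a)
          (.of_forall fun z => by positivity)).symm

lemma integral_norm_sub_sq_le_of_stronglyLogConcave {d : ℕ} {μ : ℝ} (hμ : 0 < μ)
    {p : EuclideanSpace ℝ (Fin d) → ℝ} (hlc : StronglyLogConcave μ p) (hp : ∀ z, 0 ≤ p z)
    {m : EuclideanSpace ℝ (Fin d)} (hm : ∀ z, p z ≤ p m)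
    (hpeak : p m * (2 * π / μ) ^ ((d : ℝ) / 2) ≤ 1) :
    Integrable (fun z => ‖z - m‖ ^ 2) (volume.withDensity fun z => ENNReal.ofReal (p z)) ∧
      ∫ z, ‖z - m‖ ^ 2 ∂(volume.withDensity fun z => ENNReal.ofReal (p z)) ≤ d / μ := by
  obtain ⟨hint, hle⟩ := integral_norm_sub_sq_withDensity_le (half_pos hμ) (hp m)
    (hlc.le_mul_exp_neg_mul_norm_sub_sq hμ.le hp hm)
  refine ⟨hint, hle.trans ?_⟩
  have hconst : π / (μ / 2) = 2 * π / μ := by field_simp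
  rw [Fintype.card_fin, hconst]
  calc p m * (d / (2 * (μ / 2)) * (2 * π / μ) ^ ((d : ℝ) / 2))
      = d / μ * (p m * (2 * π / μ) ^ ((d : ℝ) / 2)) := by field_simp
    _ ≤ d / μ := mul_le_of_le_one_right (by positivity) hpeak

lemma integral_le_sqrt_integral_sq {α : Type*} [MeasurableSpace α] {μ : Measure α}
    [IsProbabilityMeasure μ] {f : α → ℝ} (hf : MemLp f 2 μ) :
    ∫ x, f x ∂μ ≤ √(∫ x, f x ^ 2 ∂μ) := by
  refine le_sqrt_of_sq_le ?_
  have := variance_nonneg f μ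
  rw [variance_eq_sub hf] at this
  simpa only [Pi.pow_apply, sub_nonneg] using this

section Lipschitz

variable {E F : Type*} [NormedAddCommGroup E] [MeasurableSpace E] [NormedAddCommGroup F]
  {ν : Measure E} {K : NNReal} {D : E → F} {m : E}

lemma LipschitzWith.integrable_norm_sub_sq (hD : LipschitzWith K D)
    (hDm : AEStronglyMeasurable D ν) (h2 : Integrable (fun z => ‖z - m‖ ^ 2) ν) :
    Integrable (fun z => ‖D z - D m‖ ^ 2) ν := by
  refine (h2.const_mul (K ^ 2)).mono' (by fun_prop) (.of_forall fun z => ?_)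
  rw [norm_pow, norm_norm, ← mul_pow]
  gcongr
  exact hD.norm_sub_le z m

lemma LipschitzWith.norm_sub_integral_le [OpensMeasurableSpace E] [NormedSpace ℝ F]
    [CompleteSpace F] [IsProbabilityMeasure ν] (hD : LipschitzWith K D)
    (hDm : AEStronglyMeasurable D ν) (h2 : Integrable (fun z => ‖z - m‖ ^ 2) ν) :
    ‖D m - ∫ z, D z ∂ν‖ ≤ K * √(∫ z, ‖z - m‖ ^ 2 ∂ν) := by
  have hnorm : Continuous fun z => ‖z - m‖ := by fun_prop
  have h1 : MemLp (fun z => ‖z - m‖) 2 ν :=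
    (memLp_two_iff_integrable_sq hnorm.aestronglyMeasurable).2 h2
  have hint : Integrable D ν := by
    refine ((integrable_const ‖D m‖).add ((h1.integrable one_le_two).const_mul K)).mono' hDm
      (.of_forall fun z => ?_)
    calc ‖D z‖ ≤ ‖D m‖ + ‖D z - D m‖ := norm_le_norm_add_norm_sub' _ _
      _ ≤ ‖D m‖ + K * ‖z - m‖ := by gcongr; exact hD.norm_sub_le z m
  calc ‖D m - ∫ z, D z ∂ν‖ = ‖∫ z, (D m - D z) ∂ν‖ := by
        rw [integral_sub (integrable_const _) hint, integral_const, probReal_univ, one_smul]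
    _ ≤ ∫ z, K * ‖z - m‖ ∂ν :=
        norm_integral_le_of_norm_le ((h1.integrable one_le_two).const_mul K)
          (.of_forall fun z => by rw [norm_sub_rev]; exact hD.norm_sub_le z m)
    _ ≤ K * √(∫ z, ‖z - m‖ ^ 2 ∂ν) := by
        rw [integral_const_mul]
        gcongr
        exact integral_le_sqrt_integral_sq h1

end Lipschitz

lemma integral_norm_sub_sq_eq_integral_norm_sub_integral_sq_add {Ω F : Type*}
    [MeasurableSpace Ω] {P : Measure Ω} [IsProbabilityMeasure P]
    [NormedAddCommGroup F] [InnerProductSpace ℝ F] [CompleteSpace F] {X : Ω → F} {a : F}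
    (hX : AEStronglyMeasurable X P) (h2 : Integrable (fun ω => ‖X ω - a‖ ^ 2) P) :
    ∫ ω, ‖X ω - a‖ ^ 2 ∂P = ∫ ω, ‖X ω - ∫ ω', X ω' ∂P‖ ^ 2 ∂P + ‖(∫ ω, X ω ∂P) - a‖ ^ 2 := by
  set M := ∫ ω, X ω ∂P
  have hXa : Integrable (fun ω => X ω - a) P :=
    ((memLp_two_iff_integrable_sq_norm (by fun_prop)).2 h2).integrable one_le_two
  have hXint : Integrable X P :=
    (hXa.add (integrable_const a)).congr (.of_forall fun ω => sub_add_cancel (X ω) a)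
  have hXM : Integrable (fun ω => X ω - M) P := hXint.sub (integrable_const M)
  have hcross : Integrable (fun ω => 2 * inner ℝ (M - a) (X ω - M) + ‖M - a‖ ^ 2) P :=
    ((hXM.const_inner (M - a)).const_mul 2).add (integrable_const _)
  have hsplit (ω : Ω) :
      ‖X ω - a‖ ^ 2 = ‖X ω - M‖ ^ 2 + (2 * inner ℝ (M - a) (X ω - M) + ‖M - a‖ ^ 2) := by
    rw [← sub_add_sub_cancel (X ω) M a, norm_add_sq_real, real_inner_comm]
    ring
  have hcentred : ∫ ω, inner ℝ (M - a) (X ω - M) ∂P = 0 := by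
    rw [integral_inner hXM, integral_sub hXint (integrable_const M), integral_const,
      probReal_univ, one_smul, sub_self, inner_zero_right]
  simp only [hsplit]
  rw [integral_add ((h2.sub hcross).congr (.of_forall fun ω => by simp [hsplit])) hcross,
    integral_add (by fun_prop) (integrable_const _), integral_const_mul, hcentred]
  simp

lemma integral_le_of_ae_norm_le {α : Type*} [MeasurableSpace α] {μ : Measure α}
    [IsProbabilityMeasure μ] {f : α → ℝ} {C : ℝ} (h : ∀ᵐ x ∂μ, ‖f x‖ ≤ C) :
    ∫ x, f x ∂μ ≤ C := by
  simpa using (le_abs_self _).trans (norm_integral_le_of_norm_le_const h)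

lemma integral_le_integral_add_of_ae_le {α : Type*} [MeasurableSpace α] {μ : Measure α}
    [IsProbabilityMeasure μ] {f g : α → ℝ} {C : ℝ} (hf : AEStronglyMeasurable f μ)
    (hf0 : 0 ≤ᵐ[μ] f) (hC : 0 ≤ C) (hfg : f ≤ᵐ[μ] g) (hgf : ∀ᵐ x ∂μ, g x ≤ f x + C) :
    ∫ x, g x ∂μ ≤ ∫ x, f x ∂μ + C := by
  by_cases hg : Integrable g μ
  · have hfi : Integrable f μ := hg.mono' hf <| by
      filter_upwards [hf0, hfg] with x h0 h
      rwa [Real.norm_of_nonneg h0]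
    calc ∫ x, g x ∂μ ≤ ∫ x, f x + C ∂μ := integral_mono_ae hg (hfi.add (integrable_const C)) hgf
      _ = ∫ x, f x ∂μ + C := by
        rw [integral_add hfi (integrable_const C), integral_const, probReal_univ, one_smul]
  · rw [integral_undef hg]
    exact add_nonneg (integral_nonneg_of_ae hf0) hC

lemma norm_sub_integral_map_le_and_integral_norm_sub_sq_eq {d nx : ℕ} {μ : ℝ} (hμ : 0 < μ)
    {p : EuclideanSpace ℝ (Fin d) → ℝ} (hlc : StronglyLogConcave μ p) (hp : ∀ z, 0 ≤ p z)
    {m : EuclideanSpace ℝ (Fin d)} (hm : ∀ z, p z ≤ p m)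
    (hpeak : p m * (2 * π / μ) ^ ((d : ℝ) / 2) ≤ 1) {ν : Measure (EuclideanSpace ℝ (Fin d))}
    [IsProbabilityMeasure ν] (hν : ν = volume.withDensity fun z => ENNReal.ofReal (p z))
    {K : NNReal} {D : EuclideanSpace ℝ (Fin d) → EuclideanSpace ℝ (Fin nx)}
    (hD : LipschitzWith K D) {P : Measure (EuclideanSpace ℝ (Fin nx))} [IsProbabilityMeasure P]
    (hP : ν.map D = P) :
    ‖D m - ∫ x, x ∂P‖ ≤ K * √(d / μ) ∧
      ∫ x, ‖x - D m‖ ^ 2 ∂P = ∫ x, ‖x - ∫ x', x' ∂P‖ ^ 2 ∂P + ‖(∫ x, x ∂P) - D m‖ ^ 2 := by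
  obtain ⟨hint, hle⟩ := hν ▸ integral_norm_sub_sq_le_of_stronglyLogConcave hμ hlc hp hm hpeak
  refine ⟨?_, integral_norm_sub_sq_eq_integral_norm_sub_integral_sq_add aestronglyMeasurable_id ?_⟩
  · rw [← hP, integral_map (f := fun x => x) hD.continuous.aemeasurable (by fun_prop)]
    exact (hD.norm_sub_integral_le hD.continuous.aestronglyMeasurable hint).trans (by gcongr)
  · rw [← hP, integrable_map_measure (by fun_prop) hD.continuous.aemeasurable]
    exact hD.integrable_norm_sub_sq hD.continuous.aestronglyMeasurable hint

lemma ProbabilityTheory.Kernel.stronglyMeasurable_integral_norm_sub_integral_sq {𝒴 F : Type*}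
    [MeasurableSpace 𝒴] [NormedAddCommGroup F] [NormedSpace ℝ F] [MeasurableSpace F]
    [BorelSpace F] [SecondCountableTopology F]
    (κ : Kernel 𝒴 F) [IsSFiniteKernel κ] :
    StronglyMeasurable fun y => ∫ x, ‖x - ∫ x', x' ∂κ y‖ ^ 2 ∂κ y := by
  have hmean : StronglyMeasurable fun y => ∫ x, x ∂κ y :=
    StronglyMeasurable.integral_kernel_prod_right (f := fun _ x => x)
      measurable_snd.stronglyMeasurable
  exact StronglyMeasurable.integral_kernel_prod_right (f := fun y x => ‖x - ∫ x', x' ∂κ y‖ ^ 2)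
    ((measurable_snd.sub (hmean.measurable.comp measurable_fst)).norm.pow_const 2
      |>.stronglyMeasurable)

theorem latent_map_approximates_mmse_general {d nx : ℕ} {𝒴 : Type*} [MeasurableSpace 𝒴]
    (ρ : Measure 𝒴) [IsProbabilityMeasure ρ]
    (κ : Kernel 𝒴 (EuclideanSpace ℝ (Fin d))) [IsMarkovKernel κ]
    (κX : Kernel 𝒴 (EuclideanSpace ℝ (Fin nx))) [IsMarkovKernel κX]
    (p : 𝒴 → EuclideanSpace ℝ (Fin d) → ℝ)
    (μc : ℝ) (hμc : 0 < μc)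
    (hpnn : ∀ᵐ y ∂ρ, ∀ z, 0 ≤ p y z)
    (hdens : ∀ᵐ y ∂ρ, κ y = volume.withDensity (fun z => ENNReal.ofReal (p y z)))
    (hlc : ∀ᵐ y ∂ρ, StronglyLogConcave μc (p y))
    (hsup : ∀ᵐ y ∂ρ, ∀ z, p y z * (2 * π / μc) ^ ((d : ℝ) / 2) ≤ 1)
    (D : EuclideanSpace ℝ (Fin d) → EuclideanSpace ℝ (Fin nx))
    (LD : ℝ) (hLD : 0 ≤ LD)
    (hLip : ∀ z₁ z₂, ‖D z₁ - D z₂‖ ≤ LD * ‖z₁ - z₂‖)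
    (hpush : ∀ᵐ y ∂ρ, (κ y).map D = κX y)
    (zmap : 𝒴 → EuclideanSpace ℝ (Fin d))
    (hmap : ∀ᵐ y ∂ρ, ∀ z, p y z ≤ p y (zmap y))
    (xmmse : 𝒴 → EuclideanSpace ℝ (Fin nx))
    (hmmse : ∀ᵐ y ∂ρ, xmmse y = ∫ x, x ∂(κX y)) :
    (∫ y, ‖D (zmap y) - xmmse y‖ ∂ρ ≤ 2 * LD * Real.sqrt (d / μc)) ∧
      (∫ y, ∫ x, ‖x - D (zmap y)‖ ^ 2 ∂(κX y) ∂ρ ≤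
        (∫ y, ∫ x, ‖x - xmmse y‖ ^ 2 ∂(κX y) ∂ρ) + 4 * LD ^ 2 * (d / μc)) := by
  have hpost : ∀ᵐ y ∂ρ, ‖D (zmap y) - xmmse y‖ ≤ LD * √(d / μc) ∧
      ∫ x, ‖x - D (zmap y)‖ ^ 2 ∂κX y =
        ∫ x, ‖x - xmmse y‖ ^ 2 ∂κX y + ‖xmmse y - D (zmap y)‖ ^ 2 := by
    filter_upwards [hpnn, hdens, hlc, hsup, hpush, hmap, hmmse] with y hp hν hlc hsup hP hm hmmse
    rw [hmmse]
    exact norm_sub_integral_map_le_and_integral_norm_sub_sq_eq hμc hlc hp hm (hsup _) hν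
      (K := ⟨LD, hLD⟩) (lipschitzWith_iff_norm_sub_le.2 hLip) hP
  have hvar_meas : AEStronglyMeasurable (fun y => ∫ x, ‖x - xmmse y‖ ^ 2 ∂κX y) ρ := by
    refine κX.stronglyMeasurable_integral_norm_sub_integral_sq.aestronglyMeasurable.congr ?_
    filter_upwards [hmmse] with y hy
    rw [hy]
  have hd : 0 ≤ d / μc := by positivity
  refine ⟨?_, integral_le_integral_add_of_ae_le hvar_meas
    (.of_forall fun y => integral_nonneg fun x => by positivity) (by positivity) ?_ ?_⟩
  · calc ∫ y, ‖D (zmap y) - xmmse y‖ ∂ρ ≤ LD * √(d / μc) :=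
          integral_le_of_ae_norm_le (by simpa only [norm_norm] using hpost.mono fun y h => h.1)
      _ ≤ 2 * LD * √(d / μc) := by nlinarith [sqrt_nonneg (d / μc)]
  · filter_upwards [hpost] with y h
    rw [h.2]
    exact le_add_of_nonneg_right (sq_nonneg _)
  · filter_upwards [hpost] with y ⟨hbias, hmse⟩
    rw [hmse, norm_sub_rev]
    gcongr
    calc ‖D (zmap y) - xmmse y‖ ^ 2 ≤ (LD * √(d / μc)) ^ 2 := by gcongr
      _ ≤ 4 * LD ^ 2 * (d / μc) := by
        rw [mul_pow, sq_sqrt hd]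
        nlinarith [mul_nonneg (sq_nonneg LD) hd]

/-- **Theorem 3.8 (latent MAP approximation of the MMSE estimator).**
Let the posterior of the latent `Z` given `Y = y` be given by a Markov kernel `κ` with
density `p y`, `μc`-strongly log-concave with `(sup_z p y z)·(2π/μc)^{d/2} ≤ 1` for a.e. `y`.
Let `D : ℝᵈ → ℝ^{n_x}` be `L_D`-Lipschitz and assume the pushforward identity
`D_# p_{Z|Y}(·|y) = p_{X|Y}(·|y)` (the posterior kernel `κX` of `X = D(Z)`).  With `zmap`
the latent MAP estimator and `xmmse` the posterior mean of `X`, one has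
`E‖D(Z_MAP) − X_MMSE‖ ≤ 2·L_D·√(d/μc)` and
`E‖X − D(Z_MAP)‖² ≤ D* + 4·L_D²·(d/μc)`, where `D* = E‖X − X_MMSE‖²`. -/
theorem latent_map_approximates_mmse {d nx : ℕ} {𝒴 : Type*} [MeasurableSpace 𝒴]
    (ρ : Measure 𝒴) [IsProbabilityMeasure ρ]
    (κ : Kernel 𝒴 (EuclideanSpace ℝ (Fin d))) [IsMarkovKernel κ]
    (κX : Kernel 𝒴 (EuclideanSpace ℝ (Fin nx))) [IsMarkovKernel κX]
    (p : 𝒴 → EuclideanSpace ℝ (Fin d) → ℝ)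
    (μc : ℝ) (hμc : 0 < μc)
    (hpnn : ∀ᵐ y ∂ρ, ∀ z, 0 ≤ p y z)
    (hdens : ∀ᵐ y ∂ρ, κ y = volume.withDensity (fun z => ENNReal.ofReal (p y z)))
    (hlc : ∀ᵐ y ∂ρ, StronglyLogConcave μc (p y))
    (hsup : ∀ᵐ y ∂ρ, ∀ z, p y z * (2 * π / μc) ^ ((d : ℝ) / 2) ≤ 1)
    (D : EuclideanSpace ℝ (Fin d) → EuclideanSpace ℝ (Fin nx))
    (hD : Measurable D) (LD : ℝ) (hLD : 0 ≤ LD)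
    (hLip : ∀ z₁ z₂, ‖D z₁ - D z₂‖ ≤ LD * ‖z₁ - z₂‖)
    (hpush : ∀ᵐ y ∂ρ, (κ y).map D = κX y)
    (zmap : 𝒴 → EuclideanSpace ℝ (Fin d))
    (hmap : ∀ᵐ y ∂ρ, ∀ z, p y z ≤ p y (zmap y))
    (xmmse : 𝒴 → EuclideanSpace ℝ (Fin nx))
    (hmmse : ∀ᵐ y ∂ρ, xmmse y = ∫ x, x ∂(κX y)) :
    (∫ y, ‖D (zmap y) - xmmse y‖ ∂ρ ≤ 2 * LD * Real.sqrt (d / μc)) ∧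
      (∫ y, ∫ x, ‖x - D (zmap y)‖ ^ 2 ∂(κX y) ∂ρ ≤
        (∫ y, ∫ x, ‖x - xmmse y‖ ^ 2 ∂(κX y) ∂ρ) + 4 * LD ^ 2 * (d / μc)) :=
  latent_map_approximates_mmse_general ρ κ κX p μc hμc hpnn hdens hlc hsup D LD hLD hLip hpush zmap
    hmap xmmse hmmse
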